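/- Let X be a conjugacy class of involutions in G̃ = Z ⋊ W that contains the element (a, 0) for some involution a of W, and let X̂ be the conjugacy class of a in W. Suppose C(W, X̂) is connected with diameter at most d (every two elements of X̂ are joined by a path of length at most d), and suppose there is a natural number k such that for every u ∈ Z with (a, u) ∈ X there exists c ∈ X̂ with (c, 0) ∈ X and with (a, u) joined to (c, 0) in C(G̃, X) by a path of length at most k. Then C(G̃, X) is connected with diameter at most d + k. -/

import Mathlib

/-- The (multiplicative) group structure that `AddAut Z` carried in older Mathlib:
multiplication is composition, `(e₁ * e₂) m = e₁ (e₂ m)`. -/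
instance addAutMulGroup {Z : Type*} [AddCommGroup Z] : Group (AddAut Z) where
  mul g h := AddEquiv.trans h g
  one := AddEquiv.refl _
  inv := AddEquiv.symm
  mul_assoc _ _ _ := rfl
  one_mul _ := rfl
  mul_one _ := rfl
  inv_mul_cancel := AddEquiv.self_trans_symm

theorem addAutMul_apply {Z : Type*} [AddCommGroup Z] (e₁ e₂ : AddAut Z) (m : Z) :
    (e₁ * e₂) m = e₁ (e₂ m) := rfl

@[simp] theorem addAutOne_apply {Z : Type*} [AddCommGroup Z] (m : Z) :
    (1 : AddAut Z) m = m := rfl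

/-- The semidirect product `Z ⋊ W`, where the group `W` acts on the right on the additive
abelian group `Z` by additive automorphisms (the right action is encoded as a homomorphism
from the multiplicative opposite of `W`).  Elements are pairs `(a, u)` with `a ∈ W`, `u ∈ Z`,
and multiplication is given by `(a, u) * (b, v) = (a * b, u ^ b + v)`, where `u ^ b` denotes
the action of `b` on `u`. -/
@[ext]
structure SDP {W Z : Type*} [Group W] [AddCommGroup Z] (φ : Wᵐᵒᵖ →* AddAut Z) where
  /-- the `W`-component -/
  w : W
  /-- the `Z`-component -/
  z : Z

namespace SDP

variable {W Z : Type*} [Group W] [AddCommGroup Z] {φ : Wᵐᵒᵖ →* AddAut Z}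

instance : Mul (SDP φ) := ⟨fun x y => ⟨x.w * y.w, φ (MulOpposite.op y.w) x.z + y.z⟩⟩
instance : One (SDP φ) := ⟨⟨1, 0⟩⟩
instance : Inv (SDP φ) := ⟨fun x => ⟨x.w⁻¹, -(φ (MulOpposite.op x.w⁻¹) x.z)⟩⟩

@[simp] theorem mul_w (x y : SDP φ) : (x * y).w = x.w * y.w := rfl
@[simp] theorem mul_z (x y : SDP φ) : (x * y).z = φ (MulOpposite.op y.w) x.z + y.z := rfl
@[simp] theorem one_w : (1 : SDP φ).w = 1 := rfl
@[simp] theorem one_z : (1 : SDP φ).z = 0 := rfl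
@[simp] theorem inv_w (x : SDP φ) : x⁻¹.w = x.w⁻¹ := rfl
@[simp] theorem inv_z (x : SDP φ) : x⁻¹.z = -(φ (MulOpposite.op x.w⁻¹) x.z) := rfl

instance : Group (SDP φ) where
  mul_assoc x y z := by
    ext
    · simp [mul_assoc]
    · simp only [mul_z, mul_w, map_add]
      rw [← addAutMul_apply, ← map_mul, ← MulOpposite.op_mul, add_assoc]
  one_mul x := by ext <;> simp
  mul_one x := by ext <;> simp
  inv_mul_cancel x := by
    ext
    · simp
    · simp only [mul_z, inv_w, inv_z, mul_w, inv_mul_cancel, one_z, map_neg]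
      rw [← addAutMul_apply, ← map_mul, ← MulOpposite.op_mul]
      simp

end SDP

/-- The commuting involution graph on a set `X` of elements of a group `G`: the vertices are
the elements of `X`, and two distinct vertices are adjacent iff they commute in `G`. -/
def commGraph (G : Type*) [Group G] (X : Set G) : SimpleGraph X where
  Adj x y := (x : G) ≠ (y : G) ∧ (x : G) * y = (y : G) * x
  symm := ⟨fun x y h => ⟨h.1.symm, h.2.symm⟩⟩
  loopless := ⟨fun x h => h.1 rfl⟩

/-!
Conjugation by any element of `Z ⋊ W` is an automorphism of `C(Z ⋊ W, X)` and acts transitively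
on the class `X`, so it suffices to bound the distance from every vertex to `(a, 0)`. Conjugating
by a suitable `(h, 0)` moves any vertex to one of the form `(a, u)`; from there the hypothesis
reaches some `(c, 0)` in at most `k` steps, and the lift `c ↦ (c, 0)` of `C(W, X̂)` reaches the
image of `(a, 0)` in at most `d` further steps.
-/

open SimpleGraph

namespace SimpleGraph

variable {V V' : Type*} {G : SimpleGraph V} {G' : SimpleGraph V'}

theorem Hom.edist_le (f : G →g G') (u v : V) : G'.edist (f u) (f v) ≤ G.edist u v := by
  by_cases h : G.Reachable u v
  · obtain ⟨p, hp⟩ := h.exists_walk_length_eq_edist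
    calc G'.edist (f u) (f v) ≤ (p.map f).length := SimpleGraph.edist_le _
      _ = G.edist u v := by rw [Walk.length_map, hp]
  · rw [edist_eq_top_of_not_reachable h]
    exact le_top

theorem edist_le_coe_iff_exists_walk {u v : V} {n : ℕ} :
    G.edist u v ≤ n ↔ ∃ p : G.Walk u v, p.length ≤ n := by
  refine ⟨fun h => ?_, fun ⟨p, hp⟩ => (SimpleGraph.edist_le p).trans (by exact_mod_cast hp)⟩
  obtain ⟨p, hp⟩ := (reachable_of_edist_ne_top
    (ne_top_of_le_ne_top (ENat.natCast_ne_top n) h)).exists_walk_length_eq_edist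
  exact ⟨p, by rw [← hp] at h; exact_mod_cast h⟩

end SimpleGraph

namespace commGraph

variable {G H : Type*} [Group G] [Group H]

def map (f : G →* H) (hf : Function.Injective f) {X : Set G} {Y : Set H}
    (hXY : Set.MapsTo f X Y) : commGraph G X →g commGraph H Y where
  toFun x := ⟨f x, hXY x.2⟩
  map_rel' := fun ⟨hne, hcomm⟩ => ⟨hf.ne hne, by simp only [← map_mul, hcomm]⟩

@[simp] theorem coe_map (f : G →* H) (hf : Function.Injective f) {X : Set G} {Y : Set H}
    (hXY : Set.MapsTo f X Y) (x : X) : (map f hf hXY x : H) = f x := rfl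

theorem mapsTo_conj_conjugatesOf (x₀ g : G) :
    Set.MapsTo (MulAut.conj g) (conjugatesOf x₀) (conjugatesOf x₀) :=
  fun _ hx => IsConj.trans hx (isConj_iff.2 ⟨g, rfl⟩)

def conj (x₀ g : G) :
    commGraph G (conjugatesOf x₀) →g commGraph G (conjugatesOf x₀) :=
  map (MulAut.conj g).toMonoidHom (MulAut.conj g).injective (mapsTo_conj_conjugatesOf x₀ g)

@[simp] theorem coe_conj (x₀ g : G) (x : conjugatesOf x₀) : (conj x₀ g x : G) = g * x * g⁻¹ :=
  rfl

theorem edist_le_of_forall_edist_base_le {x₀ : G} {n : ℕ∞}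
    (h : ∀ x, (commGraph G (conjugatesOf x₀)).edist x ⟨x₀, .refl _⟩ ≤ n)
    (x y : conjugatesOf x₀) : (commGraph G (conjugatesOf x₀)).edist x y ≤ n := by
  obtain ⟨y, hy⟩ := y
  obtain ⟨g, rfl⟩ := isConj_iff.1 hy
  have hx : g⁻¹ * x * g ∈ conjugatesOf x₀ := by
    simpa using mapsTo_conj_conjugatesOf x₀ g⁻¹ x.2
  calc _ = (commGraph G _).edist (conj x₀ g ⟨_, hx⟩) (conj x₀ g ⟨x₀, .refl _⟩) := by
          congr 1; ext; simp [mul_assoc]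
    _ ≤ _ := Hom.edist_le _ _ _
    _ ≤ n := h _

end commGraph

namespace SDP

variable {W Z : Type*} [Group W] [AddCommGroup Z] {φ : Wᵐᵒᵖ →* AddAut Z}

def inl : W →* SDP φ where
  toFun c := ⟨c, 0⟩
  map_one' := rfl
  map_mul' _ _ := by ext <;> simp

def fst : SDP φ →* W where
  toFun x := x.w
  map_one' := rfl
  map_mul' _ _ := rfl

@[simp] theorem inl_w (c : W) : (inl c : SDP φ).w = c := rfl

@[simp] theorem inl_z (c : W) : (inl c : SDP φ).z = 0 := rfl

theorem inl_injective : Function.Injective (inl : W →* SDP φ) :=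
  fun _ _ h => congrArg SDP.w h

theorem mapsTo_inl_conjugatesOf (a : W) :
    Set.MapsTo (inl : W →* SDP φ) (conjugatesOf a) (conjugatesOf (inl a)) :=
  fun _ hc => inl.map_isConj hc

theorem edist_inl_le_add {a : W} {d k : ℕ∞}
    (hW : ∀ b c : conjugatesOf a, (commGraph W _).edist b c ≤ d)
    (hk : ∀ (u : Z) (hu : (⟨a, u⟩ : SDP φ) ∈ conjugatesOf (inl a)), ∃ (c : W)
      (hc0 : (⟨c, 0⟩ : SDP φ) ∈ conjugatesOf (inl a)),
      (commGraph (SDP φ) _).edist ⟨_, hu⟩ ⟨_, hc0⟩ ≤ k)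
    (x : conjugatesOf (inl a : SDP φ)) :
    (commGraph (SDP φ) _).edist x ⟨inl a, .refl _⟩ ≤ d + k := by
  rw [add_comm]
  obtain ⟨x, hx⟩ := x
  obtain ⟨h, hh⟩ : ∃ h, h * a * h⁻¹ = x.w := isConj_iff.1 (fst.map_isConj hx)
  set g : SDP φ := inl h
  have hy : g⁻¹ * x * g = ⟨a, (g⁻¹ * x * g).z⟩ := by
    ext
    · simp [g, ← hh, mul_assoc]
    · rfl
  have hyX : (⟨a, (g⁻¹ * x * g).z⟩ : SDP φ) ∈ conjugatesOf (inl a) := by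
    have := commGraph.mapsTo_conj_conjugatesOf (inl a) g⁻¹ hx
    rwa [MulAut.conj_apply, inv_inv, hy] at this
  obtain ⟨c, hc0, hck⟩ := hk _ hyX
  have hc : c ∈ conjugatesOf a := fst.map_isConj hc0
  have hc' : h⁻¹ * a * h ∈ conjugatesOf a := isConj_iff.2 ⟨h⁻¹, by group⟩
  let lift := commGraph.map (inl (φ := φ)) inl_injective (mapsTo_inl_conjugatesOf a)
  have hx' : commGraph.conj (inl a) g ⟨_, hyX⟩ = ⟨x, hx⟩ := Subtype.ext <| by
    simp only [commGraph.coe_conj, ← hy]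
    group
  have hbase : commGraph.conj (inl a) g (lift ⟨_, hc'⟩) = ⟨inl a, .refl _⟩ := Subtype.ext <| by
    simp only [commGraph.coe_conj, lift, commGraph.coe_map, g, ← map_inv, ← map_mul]
    congr 1
    group
  calc _ = (commGraph (SDP φ) _).edist (commGraph.conj (inl a) g ⟨_, hyX⟩)
          (commGraph.conj (inl a) g (lift ⟨_, hc'⟩)) := by rw [hx', hbase]
    _ ≤ (commGraph (SDP φ) _).edist ⟨_, hyX⟩ (lift ⟨_, hc'⟩) := Hom.edist_le _ _ _
    _ ≤ (commGraph (SDP φ) _).edist ⟨_, hyX⟩ (lift ⟨c, hc⟩) +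
          (commGraph (SDP φ) _).edist (lift ⟨c, hc⟩) (lift ⟨_, hc'⟩) := SimpleGraph.edist_triangle
    _ ≤ k + d := add_le_add hck ((Hom.edist_le _ _ _).trans (hW _ _))

end SDP

theorem stmt5_general {W Z : Type*} [Group W] [AddCommGroup Z] (φ : Wᵐᵒᵖ →* AddAut Z)
    (a : W)
    (X : Set (SDP φ)) (hX : X = {y | IsConj (⟨a, 0⟩ : SDP φ) y})
    (Xhat : Set W) (hXhat : Xhat = {c | IsConj a c})
    (d k : ℕ)
    (hW : ∀ b c : Xhat, ∃ p : (commGraph W Xhat).Walk b c, p.length ≤ d)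
    (hk : ∀ (u : Z) (hu : (⟨a, u⟩ : SDP φ) ∈ X),
      ∃ (c : W) (hc : c ∈ Xhat) (hc0 : (⟨c, 0⟩ : SDP φ) ∈ X),
        ∃ p : (commGraph (SDP φ) X).Walk ⟨⟨a, u⟩, hu⟩ ⟨⟨c, 0⟩, hc0⟩, p.length ≤ k) :
    (commGraph (SDP φ) X).Connected ∧
      ∀ x y : X, ∃ p : (commGraph (SDP φ) X).Walk x y, p.length ≤ d + k := by
  subst hX hXhat
  have hbase := SDP.edist_inl_le_add (fun b c => edist_le_coe_iff_exists_walk.2 (hW b c))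
    fun u hu => by
      obtain ⟨c, -, hc0, hp⟩ := hk u hu
      exact ⟨c, hc0, edist_le_coe_iff_exists_walk.2 hp⟩
  have hwalk (x y : _) : ∃ p : (commGraph (SDP φ) _).Walk x y, p.length ≤ d + k :=
    edist_le_coe_iff_exists_walk.1 <| by
      exact_mod_cast commGraph.edist_le_of_forall_edist_base_le hbase x y
  exact ⟨(connected_iff _).2 ⟨fun x y => (hwalk x y).elim fun p _ => p.reachable, ⟨⟨_, .refl _⟩⟩⟩,
    hwalk⟩

/-- Let X be a conjugacy class of involutions in G-tilde = Z ⋊ W that contains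
the element (a, 0) for some involution a of W, and let X-hat be the conjugacy class of a in
W.  Suppose C(W, X-hat) is connected with diameter at most d, and suppose there is a natural
number k such that for every u ∈ Z with (a, u) ∈ X there exists c ∈ X-hat with (c, 0) ∈ X
and with (a, u) joined to (c, 0) in C(G-tilde, X) by a path of length at most k.  Then
C(G-tilde, X) is connected with diameter at most d + k. -/
theorem stmt5 {W Z : Type*} [Group W] [AddCommGroup Z] (φ : Wᵐᵒᵖ →* AddAut Z)
    (a : W) (ha : orderOf a = 2)
    (X : Set (SDP φ)) (hX : X = {y | IsConj (⟨a, 0⟩ : SDP φ) y})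
    (Xhat : Set W) (hXhat : Xhat = {c | IsConj a c})
    (d k : ℕ)
    (hW : ∀ b c : Xhat, ∃ p : (commGraph W Xhat).Walk b c, p.length ≤ d)
    (hk : ∀ (u : Z) (hu : (⟨a, u⟩ : SDP φ) ∈ X),
      ∃ (c : W) (hc : c ∈ Xhat) (hc0 : (⟨c, 0⟩ : SDP φ) ∈ X),
        ∃ p : (commGraph (SDP φ) X).Walk ⟨⟨a, u⟩, hu⟩ ⟨⟨c, 0⟩, hc0⟩, p.length ≤ k) :
    (commGraph (SDP φ) X).Connected ∧
      ∀ x y : X, ∃ p : (commGraph (SDP φ) X).Walk x y, p.length ≤ d + k :=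
  stmt5_general φ a X hX Xhat hXhat d k hW hk
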